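/- Let F₁, …, F_R (R ≥ 2) be submodular functions on a ground set V of N elements with F_r(∅) = 0, and let 𝒜 and ℬ be the associated subspace and product of base polytopes in ℝ^{NR}. Then for any x, y ∈ ℝ^{NR} for which the faces 𝒜_x and ℬ_y are nonempty, c_F(aff₀(𝒜_x), aff₀(ℬ_y))² ≤ 1 − (R−1)/R · 2/(N²R²) ≤ 1 − 1/(N²R²). -/

import Mathlib

open scoped RealInnerProductSpace
open Finset

noncomputable section

/-- A submodular set function on `Fin N` with `F ∅ = 0`. -/
def IsSubmodular {N : ℕ} (F : Finset (Fin N) → ℝ) : Prop :=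
  F ∅ = 0 ∧ ∀ A B : Finset (Fin N), F (A ∪ B) + F (A ∩ B) ≤ F A + F B

/-- The base polytope of a set function. -/
def basePolytope {N : ℕ} (F : Finset (Fin N) → ℝ) :
    Set (EuclideanSpace ℝ (Fin N)) :=
  {s | (∀ A : Finset (Fin N), ∑ n ∈ A, s n ≤ F A) ∧ ∑ n, s n = F univ}

/-- The subspace 𝒜 = {(a₁, …, a_R) : Σ_r a_r = 0} of ℝ^{NR}. -/
def calA (N R : ℕ) : Set (EuclideanSpace ℝ (Fin R × Fin N)) :=
  {a | ∀ n : Fin N, ∑ r : Fin R, a (r, n) = 0}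

/-- The product ℬ = B(F₁) × ⋯ × B(F_R) of base polytopes in ℝ^{NR}. -/
def calB {N R : ℕ} (F : Fin R → Finset (Fin N) → ℝ) :
    Set (EuclideanSpace ℝ (Fin R × Fin N)) :=
  {b | ∀ r : Fin R, WithLp.toLp 2 (fun n => b (r, n)) ∈ basePolytope (F r)}

/-- The face of `P` in direction `x`: the set of maximizers of `⟪x, ·⟫` over `P`. -/
def face {H : Type*} [NormedAddCommGroup H] [InnerProductSpace ℝ H]
    (P : Set H) (x : H) : Set H :=
  {p ∈ P | ∀ q ∈ P, ⟪x, q⟫ ≤ ⟪x, p⟫}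

/-- `aff₀ C`: the affine hull of `C` translated to contain the origin,
as a linear subspace. -/
def aff0 {H : Type*} [NormedAddCommGroup H] [InnerProductSpace ℝ H]
    (C : Set H) : Submodule ℝ H :=
  (affineSpan ℝ C).direction

/-- The cosine of the Friedrichs angle between two subspaces. -/
def friedrichs {H : Type*} [NormedAddCommGroup H] [InnerProductSpace ℝ H]
    (U V : Submodule ℝ H) : ℝ :=
  sSup {t | ∃ u ∈ U ⊓ (U ⊓ V)ᗮ, ∃ v ∈ V ⊓ (U ⊓ V)ᗮ,
    ‖u‖ ≤ 1 ∧ ‖v‖ ≤ 1 ∧ t = ⟪u, v⟫}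

/-!
The face of the subspace `𝒜` is `𝒜` itself, the column-balanced vectors. The face of the
polyhedron `ℬ` in direction `y` has direction `V = {v ⊥ y | v vanishes on every constraint tight
on the whole face}`: a point of the face slack in all other constraints can be moved along any
such `v`. In row `r` the tight sets form a lattice, and `y` is constant on its atoms because its
superlevel sets are tight (an exchange between a non-tight superlevel set and its complement would
increase `⟪y, ·⟫`); hence every exchange `e_(r,i) - e_(r,j)` inside an atom lies in `V`, while
every `v ∈ V` sums to zero over each atom.

Given `v ∈ V ⊓ (𝒜 ⊓ V)ᗮ`, route the column sums `s_n` of `v` along paths of the graph of such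
exchanges to one root per connected component. This gives `c ∈ V` with the same column sums and
`‖c‖² ≤ 2 N² ∑ s_n²`; as `v - c ∈ 𝒜 ⊓ V`, also `‖v‖ ≤ ‖c‖`. So the projection of `v` onto `𝒜ᗮ`
(the column averages, of squared norm `∑ s_n² / R`) carries at least the fraction `1 / (2 N² R)` of
`‖v‖²`, and `⟪u, v⟫² ≤ ‖v‖² - ∑ s_n² / R ≤ 1 - 1 / (2 N² R)` for unit vectors `u ∈ 𝒜`.
-/

open Filter Topology
open scoped Classical

section ConvexGeometry

variable {H : Type*} [NormedAddCommGroup H] [InnerProductSpace ℝ H]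

theorem face_submodule {S : Submodule ℝ H} {x : H} (hx : (face (S : Set H) x).Nonempty) :
    face (S : Set H) x = S := by
  obtain ⟨p, hp, hmax⟩ := hx
  have hzero : ∀ a ∈ S, ⟪x, a⟫ = 0 := fun a ha => by
    have h₁ := hmax (p + a) (S.add_mem hp ha)
    have h₂ := hmax (p - a) (S.sub_mem hp ha)
    rw [inner_add_right] at h₁
    rw [inner_sub_right] at h₂
    linarith
  exact Set.Subset.antisymm (fun q hq => hq.1) fun q hq =>
    ⟨hq, fun a ha => by rw [hzero a ha, hzero q hq]⟩

theorem aff0_submodule (S : Submodule ℝ H) : aff0 (S : Set H) = S := by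
  have h : affineSpan ℝ (S : Set H) = S.toAffineSubspace :=
    AffineSubspace.affineSpan_coe S.toAffineSubspace
  rw [aff0, h, Submodule.toAffineSubspace_direction]

theorem inner_eq_of_mem_face {P : Set H} {y p q : H} (hp : p ∈ face P y) (hq : q ∈ face P y) :
    ⟪y, p⟫ = ⟪y, q⟫ :=
  le_antisymm (hq.2 p hp.1) (hp.2 q hq.1)

theorem mem_aff0_of_add_smul_mem {C : Set H} {p v : H} {ε : ℝ} (hε : ε ≠ 0) (hp : p ∈ C)
    (hpv : p + ε • v ∈ C) : v ∈ aff0 C := by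
  have h := AffineSubspace.vsub_mem_direction (subset_affineSpan ℝ _ hpv)
    (subset_affineSpan ℝ _ hp)
  rw [vsub_eq_sub, add_sub_cancel_left] at h
  simpa [smul_smul, inv_mul_cancel₀ hε] using (aff0 C).smul_mem ε⁻¹ h

theorem norm_sq_le_of_mem_orthogonal_of_sub_mem {W : Submodule ℝ H} {v c : H} (hv : v ∈ Wᗮ)
    (hvc : v - c ∈ W) : ‖v‖ ^ 2 ≤ ‖c‖ ^ 2 := by
  have hpyth := norm_sub_sq_eq_norm_sq_add_norm_sq_real
    (Submodule.inner_left_of_mem_orthogonal hvc hv)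
  rw [sub_sub_cancel] at hpyth
  nlinarith [norm_nonneg (v - c)]

theorem friedrichs_sq_le {U V : Submodule ℝ H} {a : ℝ}
    (h : ∀ u ∈ U, ∀ v ∈ V ⊓ (U ⊓ V)ᗮ, ‖u‖ ≤ 1 → ‖v‖ ≤ 1 → ⟪u, v⟫ ^ 2 ≤ a) :
    friedrichs U V ^ 2 ≤ a := by
  have ha : 0 ≤ a := by simpa using h 0 (zero_mem _) 0 (zero_mem _) (by simp) (by simp)
  have hbound : ∀ t ∈ {t | ∃ u ∈ U ⊓ (U ⊓ V)ᗮ, ∃ v ∈ V ⊓ (U ⊓ V)ᗮ,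
      ‖u‖ ≤ 1 ∧ ‖v‖ ≤ 1 ∧ t = ⟪u, v⟫}, t ≤ √a := by
    rintro _ ⟨u, hu, v, hv, hu1, hv1, rfl⟩
    exact Real.le_sqrt_of_sq_le (h u hu.1 v hv hu1 hv1)
  have hnonneg : 0 ≤ friedrichs U V :=
    le_csSup ⟨√a, hbound⟩ ⟨0, zero_mem _, 0, zero_mem _, by simp, by simp, by simp⟩
  calc friedrichs U V ^ 2 ≤ √a ^ 2 :=
        pow_le_pow_left₀ hnonneg (Real.sSup_le hbound (Real.sqrt_nonneg a)) 2
    _ = a := Real.sq_sqrt ha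

end ConvexGeometry

theorem exists_pos_forall_add_mul_le {ι : Type*} [Finite ι] {a d c : ι → ℝ}
    (h : ∀ i, a i < c i ∨ (a i ≤ c i ∧ d i ≤ 0)) : ∃ ε > 0, ∀ i, a i + ε * d i ≤ c i := by
  have hev : ∀ i, ∀ᶠ ε in 𝓝[>] (0 : ℝ), a i + ε * d i ≤ c i := fun i => by
    rcases h i with hlt | ⟨hle, hd⟩
    · have hlim : Tendsto (fun ε : ℝ => a i + ε * d i) (𝓝[>] 0) (𝓝 (a i)) :=
        tendsto_nhdsWithin_of_tendsto_nhds <|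
          (by fun_prop : Continuous fun ε : ℝ => a i + ε * d i).tendsto' 0 _ (by simp)
      exact (hlim.eventually_lt_const hlt).mono fun _ => le_of_lt
    · filter_upwards [self_mem_nhdsWithin] with ε (hε : 0 < ε)
      nlinarith
  obtain ⟨ε, hε, hle⟩ := ((eventually_all.2 hev).and self_mem_nhdsWithin).exists
  exact ⟨ε, hle, hε⟩

section Polyhedron

variable {E : Type*} [AddCommGroup E] [Module ℝ E] {ι : Type*}

def polyhedron (ℓ : ι → E →ₗ[ℝ] ℝ) (c : ι → ℝ) : Set E := {b | ∀ i, ℓ i b ≤ c i}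

theorem convex_polyhedron (ℓ : ι → E →ₗ[ℝ] ℝ) (c : ι → ℝ) : Convex ℝ (polyhedron ℓ c) := by
  simpa only [polyhedron, Set.ofPred_forall] using
    convex_iInter fun i => convex_halfSpace_le (ℓ i).isLinear (c i)

theorem Convex.exists_forall_lt [Finite ι] {S : Set E} (hS : Convex ℝ S) (hne : S.Nonempty)
    {ℓ : ι → E →ₗ[ℝ] ℝ} {c : ι → ℝ} (hle : ∀ b ∈ S, ∀ i, ℓ i b ≤ c i) :
    ∃ p ∈ S, ∀ i, (∃ b ∈ S, ℓ i b < c i) → ℓ i p < c i := by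
  have := Fintype.ofFinite ι
  suffices ∀ s : Finset ι, ∃ p ∈ S, ∀ i ∈ s, (∃ b ∈ S, ℓ i b < c i) → ℓ i p < c i by
    simpa using this Finset.univ
  intro s
  induction s using Finset.induction_on with
  | empty => exact ⟨hne.some, hne.some_mem, by simp⟩
  | insert j s _ ih =>
    obtain ⟨p, hp, hlt⟩ := ih
    by_cases hj : ∃ b ∈ S, ℓ j b < c j
    · obtain ⟨q, hq, hqj⟩ := hj
      -- the midpoint of `p` and `q` is strictly inside every constraint either one is
      refine ⟨(1 / 2 : ℝ) • p + (1 / 2 : ℝ) • q, hS hp hq (by norm_num) (by norm_num) (by norm_num),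
        fun i hi hslack => ?_⟩
      have hpi := hle p hp i
      have hqi := hle q hq i
      simp only [map_add, map_smul, smul_eq_mul]
      rcases Finset.mem_insert.1 hi with rfl | hi
      · linarith
      · linarith [hlt i hi hslack]
    · refine ⟨p, hp, fun i hi hslack => ?_⟩
      rcases Finset.mem_insert.1 hi with rfl | hi
      · exact absurd hslack hj
      · exact hlt i hi hslack

end Polyhedron

section PolyhedronFace

variable {H : Type*} [NormedAddCommGroup H] [InnerProductSpace ℝ H] {ι : Type*}
  {ℓ : ι → H →ₗ[ℝ] ℝ} {c : ι → ℝ} {y : H}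

theorem convex_face_polyhedron : Convex ℝ (face (polyhedron ℓ c) y) :=
  (ContinuousLinearMap.toExposed.isExposed (l := innerSL ℝ y)).convex (convex_polyhedron ℓ c)

theorem mem_aff0_face_polyhedron [Finite ι] (hy : (face (polyhedron ℓ c) y).Nonempty) {v : H} :
    v ∈ aff0 (face (polyhedron ℓ c) y) ↔
      ⟪y, v⟫ = 0 ∧ ∀ i, (∀ b ∈ face (polyhedron ℓ c) y, ℓ i b = c i) → ℓ i v = 0 := by
  constructor
  · rw [aff0, direction_affineSpan, vectorSpan_def]
    intro hv
    induction hv using Submodule.span_induction with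
    | mem w hw =>
      obtain ⟨p, hp, q, hq, rfl⟩ := Set.mem_vsub.1 hw
      refine ⟨by rw [vsub_eq_sub, inner_sub_right, inner_eq_of_mem_face hp hq, sub_self],
        fun i hi => by rw [vsub_eq_sub, map_sub, hi p hp, hi q hq, sub_self]⟩
    | zero => simp
    | add w w' _ _ h h' =>
      exact ⟨by rw [inner_add_right, h.1, h'.1, add_zero],
        fun i hi => by rw [map_add, h.2 i hi, h'.2 i hi, add_zero]⟩
    | smul a w _ h =>
      exact ⟨by rw [real_inner_smul_right, h.1, mul_zero],
        fun i hi => by rw [map_smul, h.2 i hi, smul_zero]⟩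
  · rintro ⟨hyv, hv⟩
    obtain ⟨p, hp, hslack⟩ := convex_face_polyhedron.exists_forall_lt hy fun b hb => hb.1
    obtain ⟨ε, hε, hle⟩ : ∃ ε > 0, ∀ i, ℓ i p + ε * ℓ i v ≤ c i := by
      refine exists_pos_forall_add_mul_le fun i => ?_
      by_cases htight : ∀ b ∈ face (polyhedron ℓ c) y, ℓ i b = c i
      · exact Or.inr ⟨(htight p hp).le, (hv i htight).le⟩
      · obtain ⟨b, hb, hne⟩ := not_forall₂.1 htight
        exact Or.inl (hslack i ⟨b, hb, lt_of_le_of_ne (hb.1 i) hne⟩)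
    have hinner : ⟪y, p + ε • v⟫ = ⟪y, p⟫ := by
      rw [inner_add_right, real_inner_smul_right, hyv, mul_zero, add_zero]
    refine mem_aff0_of_add_smul_mem hε.ne' hp
      ⟨fun i => by simpa using hle i, fun q hq => hinner ▸ hp.2 q hq⟩

end PolyhedronFace

section SetLattice

variable {α : Type*} [Fintype α] [DecidableEq α] {T : Set (Finset α)}

def separationSetoid (T : Set (Finset α)) : Setoid α where
  r a b := ∀ A ∈ T, a ∈ A ↔ b ∈ A
  iseqv := ⟨fun _ _ _ => Iff.rfl, fun h A hA => (h A hA).symm,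
    fun h h' A hA => (h A hA).trans (h' A hA)⟩

def leastMemContaining (T : Set (Finset α)) (a : α) : Finset α :=
  ({A | A ∈ T ∧ a ∈ A} : Finset (Finset α)).inf id

theorem leastMemContaining_mem (hT : InfClosed T) (htop : univ ∈ T) (a : α) :
    leastMemContaining T a ∈ T :=
  inf_induction htop (fun _ h _ h' => hT h h') fun _ hA => (mem_filter.1 hA).2.1

theorem mem_leastMemContaining_iff {a b : α} :
    b ∈ leastMemContaining T a ↔ ∀ A ∈ T, a ∈ A → b ∈ A := by
  simp [leastMemContaining, mem_inf]

theorem mem_leastMemContaining_self (a : α) : a ∈ leastMemContaining T a :=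
  mem_leastMemContaining_iff.2 fun _ _ h => h

theorem exists_separating_of_notMem (hT : IsSublattice T) (hbot : ∅ ∈ T) (htop : univ ∈ T)
    {A : Finset α} (hA : A ∉ T) : ∃ i ∈ A, ∃ j ∉ A, ∀ B ∈ T, i ∈ B → j ∈ B := by
  by_contra! h
  -- otherwise `A` is the union of the least members of `T` through its points
  have hA_eq : A = A.sup (leastMemContaining T) := by
    refine Subset.antisymm (fun i hi => Finset.mem_sup.2 ⟨i, hi, mem_leastMemContaining_self i⟩) ?_
    intro j hj
    obtain ⟨i, hi, hji⟩ := Finset.mem_sup.1 hj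
    by_contra hjA
    obtain ⟨B, hB, hiB, hjB⟩ := h i hi j hjA
    exact hjB (mem_leastMemContaining_iff.1 hji B hB hiB)
  exact hA (hA_eq ▸ sup_induction hbot (fun _ h _ h' => hT.supClosed h h')
    fun i _ => leastMemContaining_mem hT.infClosed htop i)

theorem exists_sdiff_eq_separationClass (hT : IsSublattice T) (hbot : ∅ ∈ T) (htop : univ ∈ T)
    (a : α) : ∃ I ∈ T, ∃ O ∈ T, O ⊆ I ∧ ({b | separationSetoid T a b} : Finset α) = I \ O := by
  let O := ({A | A ∈ T ∧ a ∉ A} : Finset (Finset α)).sup id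
  have hI := leastMemContaining_mem hT.infClosed htop a
  have hO : O ∈ T :=
    sup_induction hbot (fun _ h _ h' => hT.supClosed h h') fun A hA => (mem_filter.1 hA).2.1
  refine ⟨_, hI, leastMemContaining T a ∩ O, hT.infClosed hI hO, inter_subset_left, ext fun b => ?_⟩
  simp only [Finset.mem_sdiff, mem_inter, Finset.mem_sup, mem_filter, mem_univ, true_and, id, O,
    mem_leastMemContaining_iff]
  constructor
  · intro hab
    exact ⟨fun A hA haA => (hab A hA).1 haA,
      fun ⟨_, A, ⟨hA, haA⟩, hbA⟩ => haA ((hab A hA).2 hbA)⟩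
  · rintro ⟨hbI, hbO⟩ A hA
    exact ⟨hbI A hA, fun hbA => by_contra fun haA => hbO ⟨hbI, A, ⟨hA, haA⟩, hbA⟩⟩

theorem sum_separationClass_eq_zero {M : Type*} [AddCommGroup M] (hT : IsSublattice T)
    (hbot : ∅ ∈ T) (htop : univ ∈ T) {f : α → M} (hf : ∀ A ∈ T, ∑ b ∈ A, f b = 0) (a : α) :
    ∑ b with separationSetoid T a b, f b = 0 := by
  obtain ⟨I, hI, O, hO, hOI, hclass⟩ := exists_sdiff_eq_separationClass hT hbot htop a
  rw [hclass, sum_sdiff_eq_sub hOI, hf I hI, hf O hO, sub_zero]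

theorem sum_eq_zero_of_saturated {β M : Type*} [Fintype β] [AddCommMonoid M] (s : Setoid β)
    {C : Finset β} (hC : ∀ a ∈ C, ∀ b, s a b → b ∈ C) {f : β → M}
    (hf : ∀ a ∈ C, ∑ b with s a b, f b = 0) : ∑ a ∈ C, f a = 0 := by
  rw [← sum_fiberwise_of_maps_to (g := Quotient.mk s) fun a ha => mem_image_of_mem _ ha]
  refine sum_eq_zero fun q hq => ?_
  obtain ⟨a, ha, rfl⟩ := mem_image.1 hq
  rw [← hf a ha]
  refine sum_congr (ext fun b => ?_) fun _ _ => rfl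
  simp only [mem_filter, mem_univ, true_and, Quotient.eq]
  exact ⟨fun h => s.symm h.2, fun h => ⟨hC a ha b h, s.symm h⟩⟩

end SetLattice

section Submodular

variable {N : ℕ} {G : Finset (Fin N) → ℝ}

theorem isSublattice_setOf_sum_eq (hG : IsSubmodular G) {s : Fin N → ℝ}
    (hs : ∀ A, ∑ n ∈ A, s n ≤ G A) : IsSublattice {A | ∑ n ∈ A, s n = G A} := by
  have key : ∀ A B : Finset (Fin N), ∑ n ∈ A, s n = G A → ∑ n ∈ B, s n = G B →
      ∑ n ∈ A ∪ B, s n = G (A ∪ B) ∧ ∑ n ∈ A ∩ B, s n = G (A ∩ B) := fun A B hA hB => by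
    have hmod : ∑ n ∈ A ∪ B, s n + ∑ n ∈ A ∩ B, s n = ∑ n ∈ A, s n + ∑ n ∈ B, s n :=
      sum_union_inter
    have := hG.2 A B
    have := hs (A ∪ B)
    have := hs (A ∩ B)
    constructor <;> linarith
  exact ⟨fun A hA B hB => (key A B hA hB).1, fun A hA B hB => (key A B hA hB).2⟩

theorem exists_separating_of_sum_ne (hG : IsSubmodular G) {s : Fin N → ℝ}
    (hs : ∀ A, ∑ n ∈ A, s n ≤ G A) (huniv : ∑ n, s n = G univ) {A : Finset (Fin N)}
    (hA : ∑ n ∈ A, s n ≠ G A) : ∃ i ∈ A, ∃ j ∉ A, ∀ B, ∑ n ∈ B, s n = G B → i ∈ B → j ∈ B :=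
  exists_separating_of_notMem (isSublattice_setOf_sum_eq hG hs) (by simp [hG.1]) huniv hA

end Submodular

section Grid

variable {N R : ℕ}

def rowSum (r : Fin R) (A : Finset (Fin N)) : EuclideanSpace ℝ (Fin R × Fin N) →ₗ[ℝ] ℝ where
  toFun b := ∑ n ∈ A, b (r, n)
  map_add' _ _ := sum_add_distrib
  map_smul' _ _ := by simp [mul_sum]

def colSum (n : Fin N) : EuclideanSpace ℝ (Fin R × Fin N) →ₗ[ℝ] ℝ where
  toFun b := ∑ r, b (r, n)
  map_add' _ _ := sum_add_distrib
  map_smul' _ _ := by simp [mul_sum]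

@[simp]
theorem rowSum_apply (r : Fin R) (A : Finset (Fin N)) (b : EuclideanSpace ℝ (Fin R × Fin N)) :
    rowSum r A b = ∑ n ∈ A, b (r, n) := rfl

@[simp]
theorem colSum_apply (n : Fin N) (b : EuclideanSpace ℝ (Fin R × Fin N)) :
    colSum n b = ∑ r, b (r, n) := rfl

theorem rowSum_single (r' r : Fin R) (A : Finset (Fin N)) (i : Fin N) (a : ℝ) :
    rowSum r' A (EuclideanSpace.single (r, i) a) = if r' = r ∧ i ∈ A then a else 0 := by
  by_cases hr : r' = r <;> simp [hr, PiLp.single_apply]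

theorem colSum_single (n : Fin N) (r : Fin R) (i : Fin N) (a : ℝ) :
    colSum n (EuclideanSpace.single (r, i) a) = if n = i then a else 0 := by
  by_cases hn : n = i <;> simp [hn, PiLp.single_apply]

def exchange (r : Fin R) (i j : Fin N) : EuclideanSpace ℝ (Fin R × Fin N) :=
  EuclideanSpace.single (r, i) 1 - EuclideanSpace.single (r, j) 1

theorem exchange_apply (r r' : Fin R) (i j n : Fin N) :
    exchange r i j (r', n) =
      (if r' = r ∧ n = i then 1 else 0) - if r' = r ∧ n = j then 1 else 0 := by
  simp [exchange, PiLp.single_apply, Prod.ext_iff]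

theorem norm_exchange_sq (r : Fin R) {i j : Fin N} (hij : i ≠ j) : ‖exchange r i j‖ ^ 2 = 2 := by
  rw [exchange, norm_sub_sq_real, EuclideanSpace.inner_single_right]
  simp [hij.symm]
  norm_num

theorem inner_exchange (y : EuclideanSpace ℝ (Fin R × Fin N)) (r : Fin R) (i j : Fin N) :
    ⟪y, exchange r i j⟫ = y (r, i) - y (r, j) := by
  simp [exchange, inner_sub_right, EuclideanSpace.inner_single_right]

theorem colSum_exchange (n : Fin N) (r : Fin R) (i j : Fin N) :
    colSum n (exchange r i j) = (if n = i then 1 else 0) - if n = j then 1 else 0 := by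
  simp only [exchange, map_sub, colSum_single]

theorem rowSum_exchange (r' r : Fin R) (A : Finset (Fin N)) (i j : Fin N) :
    rowSum r' A (exchange r i j) =
      (if r' = r ∧ i ∈ A then 1 else 0) - if r' = r ∧ j ∈ A then 1 else 0 := by
  simp only [exchange, map_sub, rowSum_single]

theorem mem_calB_iff {F : Fin R → Finset (Fin N) → ℝ} {b : EuclideanSpace ℝ (Fin R × Fin N)} :
    b ∈ calB F ↔ ∀ r, (∀ A, rowSum r A b ≤ F r A) ∧ rowSum r univ b = F r univ := by
  simp [calB, basePolytope]

variable (N R) in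
def columnBalanced : Submodule ℝ (EuclideanSpace ℝ (Fin R × Fin N)) :=
  ⨅ n : Fin N, LinearMap.ker (colSum n)

theorem mem_columnBalanced {v : EuclideanSpace ℝ (Fin R × Fin N)} :
    v ∈ columnBalanced N R ↔ ∀ n, colSum n v = 0 := by
  simp [columnBalanced]

theorem aff0_face_calA {x : EuclideanSpace ℝ (Fin R × Fin N)}
    (hx : (face (calA N R) x).Nonempty) : aff0 (face (calA N R) x) = columnBalanced N R := by
  have hcalA : calA N R = columnBalanced N R := by
    ext v
    simp [calA, mem_columnBalanced]
  rw [hcalA] at hx ⊢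
  rw [face_submodule hx, aff0_submodule]

variable (R) in
def columnAverage (v : EuclideanSpace ℝ (Fin R × Fin N)) : EuclideanSpace ℝ (Fin R × Fin N) :=
  WithLp.toLp 2 fun p => colSum p.2 v / R

theorem inner_columnAverage_eq_zero {u : EuclideanSpace ℝ (Fin R × Fin N)}
    (hu : u ∈ columnBalanced N R) (v : EuclideanSpace ℝ (Fin R × Fin N)) :
    ⟪u, columnAverage R v⟫ = 0 := by
  simp only [columnAverage, PiLp.inner_apply, RCLike.inner_apply, conj_trivial,
    Fintype.sum_prod_type]
  rw [sum_comm]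
  refine sum_eq_zero fun n _ => ?_
  rw [← mul_sum, ← colSum_apply, mem_columnBalanced.1 hu n, mul_zero]

theorem sub_columnAverage_mem (hR : (R : ℝ) ≠ 0) (v : EuclideanSpace ℝ (Fin R × Fin N)) :
    v - columnAverage R v ∈ columnBalanced N R := by
  refine mem_columnBalanced.2 fun n => ?_
  simp [columnAverage, sum_sub_distrib, mul_div_cancel₀ _ hR]

theorem norm_columnAverage_sq (v : EuclideanSpace ℝ (Fin R × Fin N)) :
    ‖columnAverage R v‖ ^ 2 = (∑ n, colSum n v ^ 2) / R := by
  rw [EuclideanSpace.norm_sq_eq]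
  simp only [columnAverage, PiLp.toLp_apply, Real.norm_eq_abs, sq_abs, Fintype.sum_prod_type,
    sum_const, card_univ, Fintype.card_fin, nsmul_eq_mul, div_pow, ← sum_div]
  rcases eq_or_ne (R : ℝ) 0 with hR | hR
  · simp [hR]
  · field_simp

theorem inner_sq_le_of_mem_columnBalanced (hR : (R : ℝ) ≠ 0)
    {u : EuclideanSpace ℝ (Fin R × Fin N)} (hu : u ∈ columnBalanced N R) (hu1 : ‖u‖ ≤ 1)
    (v : EuclideanSpace ℝ (Fin R × Fin N)) :
    ⟪u, v⟫ ^ 2 ≤ ‖v‖ ^ 2 - (∑ n, colSum n v ^ 2) / R := by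
  have hw := sub_columnAverage_mem hR v
  have hpyth := norm_add_sq_real (v - columnAverage R v) (columnAverage R v)
  rw [sub_add_cancel, inner_columnAverage_eq_zero hw, norm_columnAverage_sq] at hpyth
  have hinner : ⟪u, v⟫ = ⟪u, v - columnAverage R v⟫ := by
    rw [inner_sub_right, inner_columnAverage_eq_zero hu, sub_zero]
  have hcs : |⟪u, v - columnAverage R v⟫| ≤ ‖v - columnAverage R v‖ :=
    (abs_real_inner_le_norm _ _).trans (mul_le_of_le_one_left (norm_nonneg _) hu1)
  rw [hinner, ← sq_abs]
  nlinarith [abs_nonneg ⟪u, v - columnAverage R v⟫]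

end Grid

section BaseFace

variable {N R : ℕ} {F : Fin R → Finset (Fin N) → ℝ} {y : EuclideanSpace ℝ (Fin R × Fin N)}

theorem exists_pos_add_smul_exchange_mem_calB {b : EuclideanSpace ℝ (Fin R × Fin N)}
    (hb : b ∈ calB F) {r : Fin R} {i j : Fin N}
    (hij : ∀ A, rowSum r A b = F r A → i ∈ A → j ∈ A) :
    ∃ ε : ℝ, 0 < ε ∧ b + ε • exchange r i j ∈ calB F := by
  rw [mem_calB_iff] at hb
  obtain ⟨ε, hε, hle⟩ : ∃ ε > 0, ∀ p : Fin R × Finset (Fin N),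
      rowSum p.1 p.2 b + ε * rowSum p.1 p.2 (exchange r i j) ≤ F p.1 p.2 := by
    refine exists_pos_forall_add_mul_le fun ⟨r', A⟩ => ?_
    by_cases hmove : r' = r ∧ i ∈ A ∧ j ∉ A
    · obtain ⟨rfl, hi, hj⟩ := hmove
      exact Or.inl (lt_of_le_of_ne ((hb r').1 A) fun h => hj (hij A h hi))
    · refine Or.inr ⟨(hb r').1 A, ?_⟩
      rw [rowSum_exchange]
      split_ifs <;> simp_all
  refine ⟨ε, hε, mem_calB_iff.2 fun r' =>
    ⟨fun A => by simpa only [map_add, map_smul, smul_eq_mul] using hle (r', A), ?_⟩⟩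
  rw [map_add, map_smul, rowSum_exchange, (hb r').2]
  simp

variable (F y) in
def tightSets (r : Fin R) : Set (Finset (Fin N)) :=
  {A | ∀ b ∈ face (calB F) y, rowSum r A b = F r A}

theorem isSublattice_tightSets (hF : ∀ r, IsSubmodular (F r)) (r : Fin R) :
    IsSublattice (tightSets F y r) := by
  have hrow := fun b (hb : b ∈ face (calB F) y) =>
    isSublattice_setOf_sum_eq (hF r) (s := fun n => b (r, n)) (mem_calB_iff.1 hb.1 r).1
  exact ⟨fun A hA B hB b hb => (hrow b hb).supClosed (hA b hb) (hB b hb),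
    fun A hA B hB b hb => (hrow b hb).infClosed (hA b hb) (hB b hb)⟩

theorem empty_mem_tightSets (hF : ∀ r, IsSubmodular (F r)) (r : Fin R) :
    ∅ ∈ tightSets F y r :=
  fun _ _ => by simp [(hF r).1]

theorem univ_mem_tightSets (r : Fin R) : univ ∈ tightSets F y r :=
  fun _ hb => (mem_calB_iff.1 hb.1 r).2

theorem superlevel_mem_tightSets (hF : ∀ r, IsSubmodular (F r)) (r : Fin R) (θ : ℝ) :
    ({n | θ < y (r, n)} : Finset (Fin N)) ∈ tightSets F y r := by
  intro b hb
  by_contra hA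
  have hrow := mem_calB_iff.1 hb.1 r
  obtain ⟨i, hi, j, hj, hij⟩ :=
    exists_separating_of_sum_ne (hF r) (s := fun n => b (r, n)) (A := {n | θ < y (r, n)})
      hrow.1 hrow.2 hA
  -- moving mass in row `r` from `j` to `i` stays in `calB` but increases `⟪y, ·⟫`
  obtain ⟨ε, hε, hmem⟩ := exists_pos_add_smul_exchange_mem_calB hb.1 hij
  have hmax := hb.2 _ hmem
  rw [inner_add_right, real_inner_smul_right, inner_exchange] at hmax
  simp only [mem_filter, mem_univ, true_and, not_lt] at hi hj
  nlinarith

theorem apply_eq_of_separationSetoid (hF : ∀ r, IsSubmodular (F r)) {r : Fin R} {i j : Fin N}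
    (h : separationSetoid (tightSets F y r) i j) : y (r, i) = y (r, j) := by
  have hi := h _ (superlevel_mem_tightSets hF r (y (r, i)))
  have hj := h _ (superlevel_mem_tightSets hF r (y (r, j)))
  simp only [mem_filter, mem_univ, true_and, lt_self_iff_false, false_iff, iff_false,
    not_lt] at hi hj
  linarith

theorem calB_eq_polyhedron (F : Fin R → Finset (Fin N) → ℝ) :
    calB F = polyhedron
      (Sum.elim (fun p : Fin R × Finset (Fin N) => rowSum p.1 p.2) fun r => -rowSum r univ)
      (Sum.elim (fun p => F p.1 p.2) fun r => -F r univ) := by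
  ext b
  simp only [mem_calB_iff, polyhedron, Set.mem_ofPred_eq, Sum.forall, Sum.elim_inl,
    Sum.elim_inr, Prod.forall, LinearMap.neg_apply, neg_le_neg_iff]
  exact ⟨fun h => ⟨fun r A => (h r).1 A, fun r => (h r).2.ge⟩,
    fun h r => ⟨h.1 r, le_antisymm (h.1 r univ) (h.2 r)⟩⟩

theorem mem_aff0_face_calB (hy : (face (calB F) y).Nonempty)
    {v : EuclideanSpace ℝ (Fin R × Fin N)} :
    v ∈ aff0 (face (calB F) y) ↔ ⟪y, v⟫ = 0 ∧ ∀ r, ∀ A ∈ tightSets F y r, rowSum r A v = 0 := by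
  simp only [tightSets, Set.mem_ofPred_eq]
  rw [calB_eq_polyhedron] at hy ⊢
  rw [mem_aff0_face_polyhedron hy, Sum.forall]
  simp only [Sum.elim_inl, Sum.elim_inr, Prod.forall, LinearMap.neg_apply, neg_inj, neg_eq_zero]
  refine and_congr_right fun _ => ⟨fun h => h.1, fun h => ⟨h, fun r _ => h r univ fun b hb => ?_⟩⟩
  exact le_antisymm (hb.1 (.inl (r, univ))) (neg_le_neg_iff.1 (hb.1 (.inr r)))

theorem exchange_mem_aff0 (hF : ∀ r, IsSubmodular (F r)) (hy : (face (calB F) y).Nonempty)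
    {r : Fin R} {i j : Fin N} (h : separationSetoid (tightSets F y r) i j) :
    exchange r i j ∈ aff0 (face (calB F) y) := by
  refine (mem_aff0_face_calB hy).2
    ⟨by rw [inner_exchange, apply_eq_of_separationSetoid hF h, sub_self], fun r' A hA => ?_⟩
  rw [rowSum_exchange]
  by_cases hr : r' = r
  · subst hr
    simp [h A hA]
  · simp [hr]

theorem sum_separationClass_eq_zero_of_mem_aff0 (hF : ∀ r, IsSubmodular (F r))
    (hy : (face (calB F) y).Nonempty) {v : EuclideanSpace ℝ (Fin R × Fin N)}
    (hv : v ∈ aff0 (face (calB F) y)) (r : Fin R) (a : Fin N) :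
    ∑ n with separationSetoid (tightSets F y r) a n, v (r, n) = 0 :=
  sum_separationClass_eq_zero (isSublattice_tightSets hF r) (empty_mem_tightSets hF r)
    (univ_mem_tightSets r) (fun A hA => ((mem_aff0_face_calB hy).1 hv).2 r A hA) a

end BaseFace

section WalkVector

variable {N R : ℕ} (G : SimpleGraph (Fin N)) (ρ : ∀ i j, G.Adj i j → Fin R)

def walkVector : ∀ {i j : Fin N}, G.Walk i j → EuclideanSpace ℝ (Fin R × Fin N)
  | _, _, .nil => 0
  | i, _, @SimpleGraph.Walk.cons _ _ _ k _ h p => exchange (ρ i k h) i k + walkVector p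

theorem colSum_walkVector {i j : Fin N} (p : G.Walk i j) (n : Fin N) :
    colSum n (walkVector G ρ p) = (if n = i then 1 else 0) - if n = j then 1 else 0 := by
  induction p with
  | nil => simp [walkVector]
  | cons h p ih => rw [walkVector, map_add, colSum_exchange, ih]; ring

theorem walkVector_apply_of_notMem_support {i j : Fin N} (p : G.Walk i j) {n : Fin N}
    (hn : n ∉ p.support) (r : Fin R) : walkVector G ρ p (r, n) = 0 := by
  induction p with
  | nil => rfl
  | cons h p ih =>
    simp only [SimpleGraph.Walk.support_cons, List.mem_cons, not_or] at hn
    have hne : n ≠ _ := fun h' => hn.2 (h' ▸ p.start_mem_support)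
    rw [walkVector, PiLp.add_apply, ih hn.2, exchange_apply]
    simp [hn.1, hne]

theorem walkVector_apply_start_nonneg {i j : Fin N} (p : G.Walk i j) (hp : p.IsPath) (r : Fin R) :
    0 ≤ walkVector G ρ p (r, i) := by
  cases p with
  | nil => rfl
  | cons h p =>
    rw [SimpleGraph.Walk.cons_isPath_iff] at hp
    rw [walkVector, PiLp.add_apply, walkVector_apply_of_notMem_support G ρ p hp.2, exchange_apply]
    simp [h.ne]
    split_ifs <;> norm_num

theorem norm_walkVector_sq_le {i j : Fin N} (p : G.Walk i j) (hp : p.IsPath) :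
    ‖walkVector G ρ p‖ ^ 2 ≤ 2 * p.length := by
  induction p with
  | nil => simp [walkVector]
  | @cons u v _ h p ih =>
    rw [SimpleGraph.Walk.cons_isPath_iff] at hp
    -- the first edge leaves a vertex the rest of the path never visits again
    have hcross : ⟪exchange (ρ u v h) u v, walkVector G ρ p⟫ ≤ 0 := by
      rw [real_inner_comm, inner_exchange, walkVector_apply_of_notMem_support G ρ p hp.2]
      linarith [walkVector_apply_start_nonneg G ρ p hp.1 (ρ _ _ h)]
    rw [walkVector, norm_add_sq_real, norm_exchange_sq _ h.ne, SimpleGraph.Walk.length_cons]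
    push_cast
    linarith [ih hp.1]

theorem walkVector_mem {S : Submodule ℝ (EuclideanSpace ℝ (Fin R × Fin N))}
    (hS : ∀ i j (h : G.Adj i j), exchange (ρ i j h) i j ∈ S) {i j : Fin N} (p : G.Walk i j) :
    walkVector G ρ p ∈ S := by
  induction p with
  | nil => exact S.zero_mem
  | cons h p ih => exact S.add_mem (hS _ _ h) ih

def componentRoot (n : Fin N) : Fin N := (G.connectedComponentMk n).out

def pathToRoot (n : Fin N) : G.Path n (componentRoot G n) :=
  (SimpleGraph.ConnectedComponent.exact (Quot.out_eq _).symm : G.Reachable n _).some.toPath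

def routeToRoots (s : Fin N → ℝ) : EuclideanSpace ℝ (Fin R × Fin N) :=
  ∑ n, s n • walkVector G ρ (pathToRoot G n).1

theorem routeToRoots_mem {S : Submodule ℝ (EuclideanSpace ℝ (Fin R × Fin N))}
    (hS : ∀ i j (h : G.Adj i j), exchange (ρ i j h) i j ∈ S) (s : Fin N → ℝ) :
    routeToRoots G ρ s ∈ S :=
  S.sum_mem fun _ _ => S.smul_mem _ (walkVector_mem G ρ hS _)

theorem colSum_routeToRoots {s : Fin N → ℝ}
    (hs : ∀ c : G.ConnectedComponent, ∑ n with G.connectedComponentMk n = c, s n = 0)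
    (m : Fin N) : colSum m (routeToRoots G ρ s) = s m := by
  have hroots : ∑ n, (if m = componentRoot G n then s n else 0) = 0 := by
    rw [← sum_fiberwise univ G.connectedComponentMk]
    refine sum_eq_zero fun c _ => ?_
    rw [sum_congr rfl fun n hn => by rw [componentRoot, (mem_filter.1 hn).2], sum_ite_irrel]
    simp [hs c]
  simp only [routeToRoots, map_sum, map_smul, colSum_walkVector, smul_eq_mul, mul_sub, mul_ite,
    mul_one, mul_zero, sum_sub_distrib, sum_ite_eq, mem_univ, if_true]
  rw [hroots, sub_zero]

theorem norm_routeToRoots_sq_le (s : Fin N → ℝ) :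
    ‖routeToRoots G ρ s‖ ^ 2 ≤ 2 * N ^ 2 * ∑ n, s n ^ 2 := by
  have hwalk : ∀ n, ‖walkVector G ρ (pathToRoot G n).1‖ ^ 2 ≤ 2 * N := fun n => by
    have hlen := (pathToRoot G n).2.length_lt
    rw [Fintype.card_fin] at hlen
    have hlen' : ((pathToRoot G n).1.length : ℝ) ≤ N := by exact_mod_cast hlen.le
    linarith [norm_walkVector_sq_le G ρ _ (pathToRoot G n).2]
  have htri : ‖routeToRoots G ρ s‖ ≤ ∑ n, |s n| * ‖walkVector G ρ (pathToRoot G n).1‖ :=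
    (norm_sum_le _ _).trans_eq (sum_congr rfl fun n _ => by rw [norm_smul, Real.norm_eq_abs])
  calc ‖routeToRoots G ρ s‖ ^ 2
      ≤ (∑ n, |s n| * ‖walkVector G ρ (pathToRoot G n).1‖) ^ 2 :=
        pow_le_pow_left₀ (norm_nonneg _) htri 2
    _ ≤ (∑ n, |s n| ^ 2) * ∑ n, ‖walkVector G ρ (pathToRoot G n).1‖ ^ 2 :=
        sum_mul_sq_le_sq_mul_sq _ _ _
    _ ≤ (∑ n, s n ^ 2) * ∑ _n : Fin N, 2 * (N : ℝ) := by
        simp only [sq_abs]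
        exact mul_le_mul_of_nonneg_left (sum_le_sum fun n _ => hwalk n)
          (sum_nonneg fun n _ => sq_nonneg _)
    _ = 2 * N ^ 2 * ∑ n, s n ^ 2 := by simp; ring

end WalkVector

section ExchangeGraph

variable {N R : ℕ} {F : Fin R → Finset (Fin N) → ℝ} {y : EuclideanSpace ℝ (Fin R × Fin N)}

variable (F y) in
def exchangeGraph : SimpleGraph (Fin N) where
  Adj i j := i ≠ j ∧ ∃ r, separationSetoid (tightSets F y r) i j
  symm := ⟨fun _ _ ⟨hne, r, h⟩ => ⟨hne.symm, r, (separationSetoid _).symm h⟩⟩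
  loopless := ⟨fun _ h => h.1 rfl⟩

theorem sum_colSum_component_eq_zero (hF : ∀ r, IsSubmodular (F r))
    (hy : (face (calB F) y).Nonempty) {v : EuclideanSpace ℝ (Fin R × Fin N)}
    (hv : v ∈ aff0 (face (calB F) y)) (c : (exchangeGraph F y).ConnectedComponent) :
    ∑ n with (exchangeGraph F y).connectedComponentMk n = c, colSum n v = 0 := by
  simp only [colSum_apply]
  rw [sum_comm]
  refine sum_eq_zero fun r _ => sum_eq_zero_of_saturated (separationSetoid (tightSets F y r))
    (fun a ha b hab => ?_) fun a _ => sum_separationClass_eq_zero_of_mem_aff0 hF hy hv r a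
  rw [mem_filter] at ha ⊢
  refine ⟨mem_univ b, ha.2 ▸ (SimpleGraph.ConnectedComponent.sound ?_).symm⟩
  rcases eq_or_ne a b with rfl | hne
  · rfl
  · exact SimpleGraph.Adj.reachable ⟨hne, r, hab⟩

theorem norm_sq_le_of_mem_aff0_face_calB (hF : ∀ r, IsSubmodular (F r))
    (hy : (face (calB F) y).Nonempty) {v : EuclideanSpace ℝ (Fin R × Fin N)}
    (hv : v ∈ aff0 (face (calB F) y) ⊓ (columnBalanced N R ⊓ aff0 (face (calB F) y))ᗮ) :
    ‖v‖ ^ 2 ≤ 2 * N ^ 2 * ∑ n, colSum n v ^ 2 := by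
  let G := exchangeGraph F y
  let ρ : ∀ i j, G.Adj i j → Fin R := fun _ _ h => h.2.choose
  have hc : routeToRoots G ρ (colSum · v) ∈ aff0 (face (calB F) y) :=
    routeToRoots_mem G ρ (fun _ _ h => exchange_mem_aff0 hF hy h.2.choose_spec) _
  have hcol := colSum_routeToRoots G ρ (sum_colSum_component_eq_zero hF hy hv.1)
  have hvc : v - routeToRoots G ρ (colSum · v) ∈ columnBalanced N R ⊓ aff0 (face (calB F) y) :=
    ⟨mem_columnBalanced.2 fun n => by rw [map_sub, hcol, sub_self], Submodule.sub_mem _ hv.1 hc⟩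
  exact (norm_sq_le_of_mem_orthogonal_of_sub_mem hv.2 hvc).trans (norm_routeToRoots_sq_le G ρ _)

end ExchangeGraph

def rateConstant (N R : ℕ) : ℝ := ((R : ℝ) - 1) / R * (2 / ((N : ℝ) ^ 2 * R ^ 2))

theorem sub_le_one_sub_rateConstant {N R : ℕ} (hR : 2 ≤ R) {t S : ℝ} (ht : t ≤ 1) (hS : 0 ≤ S)
    (htS : t ≤ 2 * N ^ 2 * R * S) : t - S ≤ 1 - rateConstant N R := by
  have hR' : (2 : ℝ) ≤ R := by exact_mod_cast hR
  rcases Nat.eq_zero_or_pos N with rfl | hN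
  · simp [rateConstant] at htS ⊢
    linarith
  have hN' : (1 : ℝ) ≤ N := by exact_mod_cast hN
  have hκ : 0 ≤ rateConstant N R :=
    mul_nonneg (div_nonneg (by linarith) (by positivity)) (by positivity)
  have hκ_mul : rateConstant N R * (2 * N ^ 2 * R) ≤ 1 := by
    have : rateConstant N R * (2 * N ^ 2 * R) = 4 * ((R : ℝ) - 1) / R ^ 2 := by
      rw [rateConstant]
      field_simp
      ring
    rw [this, div_le_one (by positivity)]
    nlinarith
  have hκ_le : rateConstant N R ≤ 1 :=
    le_trans (le_mul_of_one_le_right hκ (by nlinarith)) hκ_mul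
  -- `t - S ≤ t - κ t = (1 - κ) t ≤ 1 - κ` for `κ = rateConstant N R`
  nlinarith [mul_le_mul_of_nonneg_left htS hκ]

theorem one_sub_rateConstant_le {N R : ℕ} (hR : 2 ≤ R) :
    1 - rateConstant N R ≤ 1 - 1 / ((N : ℝ) ^ 2 * R ^ 2) := by
  have hR' : (2 : ℝ) ≤ R := by exact_mod_cast hR
  have h2 : 1 ≤ ((R : ℝ) - 1) / R * 2 := by
    rw [div_mul_eq_mul_div, le_div_iff₀ (by positivity)]
    linarith
  have hsplit : rateConstant N R = ((R : ℝ) - 1) / R * 2 * (1 / ((N : ℝ) ^ 2 * R ^ 2)) := by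
    rw [rateConstant]
    ring
  rw [sub_le_sub_iff_left, hsplit]
  exact le_mul_of_one_le_left (by positivity) h2

theorem stmt7 {N R : ℕ} (hR : 2 ≤ R)
    (F : Fin R → Finset (Fin N) → ℝ) (hF : ∀ r, IsSubmodular (F r))
    (x y : EuclideanSpace ℝ (Fin R × Fin N))
    (hx : (face (calA N R) x).Nonempty) (hy : (face (calB F) y).Nonempty) :
    friedrichs (aff0 (face (calA N R) x)) (aff0 (face (calB F) y)) ^ 2 ≤
      1 - ((R : ℝ) - 1) / R * (2 / ((N : ℝ) ^ 2 * R ^ 2)) ∧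
    1 - ((R : ℝ) - 1) / R * (2 / ((N : ℝ) ^ 2 * R ^ 2)) ≤
      1 - 1 / ((N : ℝ) ^ 2 * R ^ 2) := by
  have hR0 : (R : ℝ) ≠ 0 := by positivity
  refine ⟨?_, one_sub_rateConstant_le hR⟩
  rw [aff0_face_calA hx]
  refine friedrichs_sq_le fun u hu v hv hu1 hv1 => ?_
  have hcore := norm_sq_le_of_mem_aff0_face_calB hF hy hv
  refine (inner_sq_le_of_mem_columnBalanced hR0 hu hu1 v).trans <|
    sub_le_one_sub_rateConstant hR (pow_le_one₀ (norm_nonneg v) hv1) (by positivity) ?_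
  rwa [mul_assoc _ (R : ℝ), mul_div_cancel₀ _ hR0]
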